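/- arXiv:2406.03709 — 3 statements merged into one kernel-verified Lean document; each statement's English description precedes it below -/
import Mathlib

section
/- Assume uniform ellipticity: there is δ > 0 with vᵀΣv ≥ δ|v|² for all v ∈ ℝ^m. Then for any P₊ > 0 and P₋ > 0 there exist constants c₁ > 0 and c₂ > 0 such that H₊(v,P₊,P₋) ≥ c₁|v|² − c₂(|v| + 1) and H₋(v,P₊,P₋) ≥ c₁|v|² − c₂(|v| + 1) for all v ∈ ℝ^m₊. -/
open MeasureTheory Set

section Helpers

lemma intBdd {E : Type} [MeasurableSpace E] {ν : Measure E} [IsFiniteMeasure ν]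
    {f : E → ℝ} (hf : Measurable f) {C : ℝ} (h : ∀ e, |f e| ≤ C) :
    Integrable f ν :=
  (integrable_const C).mono' hf.aestronglyMeasurable (ae_of_all _ (by simpa using h))

lemma keyPlus (Pp Pm x : ℝ) (hPp : 0 < Pp) (hPm : 0 < Pm) :
    min Pp Pm * x ^ 2
      ≤ Pp * ((max (1 + x) 0) ^ 2 - 1 - 2 * x) + Pm * (max (-(1 + x)) 0) ^ 2 := by
  rcases le_or_gt 0 (1 + x) with h | h
  · rw [max_eq_left h, max_eq_right (by linarith)]
    have h1 : min Pp Pm ≤ Pp := min_le_left _ _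
    nlinarith [sq_nonneg x]
  · rw [max_eq_right h.le, max_eq_left (by linarith)]
    rcases le_total Pp Pm with hc | hc
    · rw [min_eq_left hc]
      nlinarith [mul_nonneg (sub_nonneg.2 hc) (sq_nonneg (1 + x))]
    · rw [min_eq_right hc]
      nlinarith [mul_nonneg (sub_nonneg.2 hc) (by linarith : (0:ℝ) ≤ -(2 * x + 1))]

lemma keyMinus (Pp Pm x : ℝ) (hPp : 0 < Pp) (hPm : 0 < Pm) :
    min Pp Pm * x ^ 2
      ≤ Pm * ((max (1 - x) 0) ^ 2 - 1 + 2 * x) + Pp * (max (-(1 - x)) 0) ^ 2 := by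
  have h := keyPlus Pm Pp (-x) hPm hPp
  have e1 : (1 : ℝ) + -x = 1 - x := by ring
  rw [e1, min_comm Pm Pp, neg_sq] at h
  linarith

lemma boundPlus (Pp Pm x B : ℝ) (hPp : 0 < Pp) (hPm : 0 < Pm) (hB : 0 ≤ B) (hx : |x| ≤ B) :
    |Pp * ((max (1 + x) 0) ^ 2 - 1 - 2 * x) + Pm * (max (-(1 + x)) 0) ^ 2|
      ≤ Pp * ((1 + B) ^ 2 + 1 + 2 * B) + Pm * (1 + B) ^ 2 := by
  have hx1 := abs_le.1 hx
  have h1 : (0:ℝ) ≤ max (1 + x) 0 := le_max_right _ _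
  have h2 : max (1 + x) 0 ≤ 1 + B := max_le (by linarith) (by linarith)
  have h3 : (0:ℝ) ≤ max (-(1 + x)) 0 := le_max_right _ _
  have h4 : max (-(1 + x)) 0 ≤ 1 + B := max_le (by linarith) (by linarith)
  rw [abs_le]
  constructor <;> nlinarith [mul_le_mul_of_nonneg_left (mul_self_le_mul_self h1 h2) hPp.le,
    mul_le_mul_of_nonneg_left (mul_self_le_mul_self h3 h4) hPm.le,
    mul_nonneg hPp.le (mul_self_nonneg (max (1 + x) 0)),
    mul_nonneg hPm.le (mul_self_nonneg (max (-(1 + x)) 0))]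

lemma boundMinus (Pp Pm x B : ℝ) (hPp : 0 < Pp) (hPm : 0 < Pm) (hB : 0 ≤ B) (hx : |x| ≤ B) :
    |Pm * ((max (1 - x) 0) ^ 2 - 1 + 2 * x) + Pp * (max (-(1 - x)) 0) ^ 2|
      ≤ Pm * ((1 + B) ^ 2 + 1 + 2 * B) + Pp * (1 + B) ^ 2 := by
  have h := boundPlus Pm Pp (-x) B hPm hPp hB (by rwa [abs_neg])
  have e1 : (1 : ℝ) + -x = 1 - x := by ring
  rw [e1] at h
  have e2 : Pm * ((max (1 - x) 0) ^ 2 - 1 - 2 * (-x)) + Pp * (max (-(1 - x)) 0) ^ 2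
      = Pm * ((max (1 - x) 0) ^ 2 - 1 + 2 * x) + Pp * (max (-(1 - x)) 0) ^ 2 := by ring
  rwa [e2] at h

end Helpers

/-- The Hamiltonian `H₊(v, P₊, P₋)` (time-invariant coefficients). -/
noncomputable def Hplus {E : Type} [MeasurableSpace E] {m n ℓ : ℕ}
    (μ : Fin m → ℝ) (σ : Matrix (Fin m) (Fin n) ℝ)
    (ν : Fin ℓ → Measure E) (β : Fin ℓ → E → Fin m → ℝ)
    (v : Fin m → ℝ) (Pp Pm : ℝ) : ℝ :=
  Pp * ∑ k, (∑ i, σ i k * v i) ^ 2 + 2 * Pp * ∑ i, μ i * v i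
    + ∑ j, ∫ e, (Pp * ((max (1 + ∑ i, v i * β j e i) 0) ^ 2
          - 1 - 2 * ∑ i, v i * β j e i)
        + Pm * (max (-(1 + ∑ i, v i * β j e i)) 0) ^ 2) ∂(ν j)

/-- The Hamiltonian `H₋(v, P₊, P₋)` (time-invariant coefficients). -/
noncomputable def Hminus {E : Type} [MeasurableSpace E] {m n ℓ : ℕ}
    (μ : Fin m → ℝ) (σ : Matrix (Fin m) (Fin n) ℝ)
    (ν : Fin ℓ → Measure E) (β : Fin ℓ → E → Fin m → ℝ)
    (v : Fin m → ℝ) (Pp Pm : ℝ) : ℝ :=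
  Pm * ∑ k, (∑ i, σ i k * v i) ^ 2 - 2 * Pm * ∑ i, μ i * v i
    + ∑ j, ∫ e, (Pm * ((max (1 - ∑ i, v i * β j e i) 0) ^ 2
          - 1 + 2 * ∑ i, v i * β j e i)
        + Pp * (max (-(1 - ∑ i, v i * β j e i)) 0) ^ 2) ∂(ν j)

/-- `H*₊(P₊, P₋) = inf_{v ∈ ℝ^m₊} H₊(v, P₊, P₋)`. -/
noncomputable def HstarPlus {E : Type} [MeasurableSpace E] {m n ℓ : ℕ}
    (μ : Fin m → ℝ) (σ : Matrix (Fin m) (Fin n) ℝ)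
    (ν : Fin ℓ → Measure E) (β : Fin ℓ → E → Fin m → ℝ)
    (Pp Pm : ℝ) : ℝ :=
  sInf ((fun v => Hplus μ σ ν β v Pp Pm) '' {v : Fin m → ℝ | ∀ i, 0 ≤ v i})

/-- `H*₋(P₊, P₋) = inf_{v ∈ ℝ^m₊} H₋(v, P₊, P₋)`. -/
noncomputable def HstarMinus {E : Type} [MeasurableSpace E] {m n ℓ : ℕ}
    (μ : Fin m → ℝ) (σ : Matrix (Fin m) (Fin n) ℝ)
    (ν : Fin ℓ → Measure E) (β : Fin ℓ → E → Fin m → ℝ)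
    (Pp Pm : ℝ) : ℝ :=
  sInf ((fun v => Hminus μ σ ν β v Pp Pm) '' {v : Fin m → ℝ | ∀ i, 0 ≤ v i})

/-- `Σ = σσᵀ + ∑_j ∫_E β_j(e) β_j(e)ᵀ ν_j(de)`, defined entrywise. -/
noncomputable def SigmaMat {E : Type} [MeasurableSpace E] {m n ℓ : ℕ}
    (σ : Matrix (Fin m) (Fin n) ℝ) (ν : Fin ℓ → Measure E)
    (β : Fin ℓ → E → Fin m → ℝ) : Matrix (Fin m) (Fin m) ℝ :=
  Matrix.of fun i k => (∑ j', σ i j' * σ k j') + ∑ j, ∫ e, β j e i * β j e k ∂(ν j)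

lemma quadEq {E : Type} [MeasurableSpace E] {m n ℓ : ℕ}
    (σ : Matrix (Fin m) (Fin n) ℝ) (ν : Fin ℓ → Measure E) [∀ j, IsFiniteMeasure (ν j)]
    (β : Fin ℓ → E → Fin m → ℝ) (hβmeas : ∀ j, Measurable (β j))
    {C : ℝ} (hC0 : 0 ≤ C) (hC : ∀ j e i, |β j e i| ≤ C) (v : Fin m → ℝ) :
    (∑ k, (∑ i, σ i k * v i) ^ 2) + ∑ j, ∫ e, (∑ i, v i * β j e i) ^ 2 ∂(ν j)
      = ∑ i, ∑ k, v i * SigmaMat σ ν β i k * v k := by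
  have hβik : ∀ (j : Fin ℓ) (i k : Fin m), Integrable (fun e => β j e i * β j e k) (ν j) := by
    intro j i k
    refine intBdd (((measurable_pi_apply i).comp (hβmeas j)).mul
      ((measurable_pi_apply k).comp (hβmeas j))) (C := C * C) fun e => ?_
    rw [abs_mul]
    exact mul_le_mul (hC j e i) (hC j e k) (abs_nonneg _) hC0
  have h2 : ∀ j : Fin ℓ, ∫ e, (∑ i, v i * β j e i) ^ 2 ∂(ν j)
      = ∑ i, ∑ k, v i * v k * ∫ e, β j e i * β j e k ∂(ν j) := by
    intro j
    have he : ∀ e, (∑ i, v i * β j e i) ^ 2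
        = ∑ i, ∑ k, v i * v k * (β j e i * β j e k) := by
      intro e
      rw [sq, Finset.sum_mul_sum]
      exact Finset.sum_congr rfl fun i _ => Finset.sum_congr rfl fun k _ => by ring
    simp_rw [he]
    rw [integral_finset_sum _ fun i _ =>
      integrable_finset_sum _ fun k _ => (hβik j i k).const_mul _]
    refine Finset.sum_congr rfl fun i _ => ?_
    rw [integral_finset_sum _ fun k _ => (hβik j i k).const_mul _]
    exact Finset.sum_congr rfl fun k _ => integral_const_mul _ _
  simp_rw [h2, SigmaMat, Matrix.of_apply, mul_add, add_mul, Finset.sum_add_distrib,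
    Finset.mul_sum, Finset.sum_mul]
  congr 1
  · simp_rw [sq, Finset.sum_mul_sum]
    rw [Finset.sum_comm]
    refine Finset.sum_congr rfl fun a _ => ?_
    rw [Finset.sum_comm]
    exact Finset.sum_congr rfl fun b _ => Finset.sum_congr rfl fun k _ => by ring
  · rw [Finset.sum_comm]
    refine Finset.sum_congr rfl fun i _ => ?_
    rw [Finset.sum_comm]
    exact Finset.sum_congr rfl fun k _ => Finset.sum_congr rfl fun j _ => by ring

/-- coercivity of `H₊` and `H₋`: for `P₊, P₋ > 0` there are `c₁, c₂ > 0` with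
`H_±(v,P₊,P₋) ≥ c₁|v|² − c₂(|v| + 1)` on `ℝ^m₊`. -/
theorem stmt8 {E : Type} [MeasurableSpace E] {m n ℓ : ℕ}
    (hm : 0 < m) (hn : 0 < n) (hl : 0 < ℓ)
    (μ : Fin m → ℝ) (σ : Matrix (Fin m) (Fin n) ℝ)
    (ν : Fin ℓ → Measure E) [∀ j, IsFiniteMeasure (ν j)]
    (β : Fin ℓ → E → Fin m → ℝ)
    (hβmeas : ∀ j, Measurable (β j))
    (hβbd : ∃ C, ∀ j e i, |β j e i| ≤ C)
    (δ : ℝ) (hδ : 0 < δ)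
    (hell : ∀ v : Fin m → ℝ,
      δ * ∑ i, v i ^ 2 ≤ ∑ i, ∑ k, v i * SigmaMat σ ν β i k * v k)
    (Pp Pm : ℝ) (hPp : 0 < Pp) (hPm : 0 < Pm) :
    ∃ c₁ > (0:ℝ), ∃ c₂ > (0:ℝ), ∀ v : Fin m → ℝ, (∀ i, 0 ≤ v i) →
      c₁ * (∑ i, v i ^ 2) - c₂ * (Real.sqrt (∑ i, v i ^ 2) + 1)
          ≤ Hplus μ σ ν β v Pp Pm ∧
      c₁ * (∑ i, v i ^ 2) - c₂ * (Real.sqrt (∑ i, v i ^ 2) + 1)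
          ≤ Hminus μ σ ν β v Pp Pm := by
  obtain ⟨C₀, hC₀⟩ := hβbd
  set C : ℝ := max C₀ 0 with hCdef
  have hC0 : 0 ≤ C := le_max_right _ _
  have hC : ∀ j e i, |β j e i| ≤ C := fun j e i => (hC₀ j e i).trans (le_max_left _ _)
  set P0 : ℝ := min Pp Pm with hP0def
  have hP0 : 0 < P0 := lt_min hPp hPm
  set M : ℝ := ∑ i, |μ i| with hMdef
  have hM0 : 0 ≤ M := Finset.sum_nonneg fun _ _ => abs_nonneg _
  set Pmax : ℝ := max Pp Pm with hPmaxdef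
  refine ⟨P0 * δ, mul_pos hP0 hδ, 2 * Pmax * M + 1, by positivity, fun v _ => ?_⟩
  set S : ℝ := ∑ i, v i ^ 2 with hSdef
  have hS0 : 0 ≤ S := Finset.sum_nonneg fun _ _ => sq_nonneg _
  have hsq : 0 ≤ Real.sqrt S := Real.sqrt_nonneg _
  have hvi : ∀ i, |v i| ≤ Real.sqrt S := fun i => by
    rw [← Real.sqrt_sq_eq_abs]
    exact Real.sqrt_le_sqrt
      (Finset.single_le_sum (fun i _ => sq_nonneg (v i)) (Finset.mem_univ i))
  have hmu : |∑ i, μ i * v i| ≤ M * Real.sqrt S := by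
    calc |∑ i, μ i * v i| ≤ ∑ i, |μ i * v i| := Finset.abs_sum_le_sum_abs _ _
      _ ≤ ∑ i, |μ i| * Real.sqrt S := by
          refine Finset.sum_le_sum fun i _ => ?_
          rw [abs_mul]
          exact mul_le_mul_of_nonneg_left (hvi i) (abs_nonneg _)
      _ = M * Real.sqrt S := by rw [← Finset.sum_mul]
  have habs := abs_le.1 hmu
  set B : ℝ := (∑ i, |v i|) * C with hBdef
  have hB0 : 0 ≤ B :=
    mul_nonneg (Finset.sum_nonneg fun _ _ => abs_nonneg _) hC0
  have hxmeas : ∀ j, Measurable fun e => ∑ i, v i * β j e i := fun j =>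
    Finset.measurable_sum _ fun i _ =>
      measurable_const.mul ((measurable_pi_apply i).comp (hβmeas j))
  have hxbd : ∀ j e, |∑ i, v i * β j e i| ≤ B := fun j e => by
    calc |∑ i, v i * β j e i| ≤ ∑ i, |v i * β j e i| := Finset.abs_sum_le_sum_abs _ _
      _ ≤ ∑ i, |v i| * C := Finset.sum_le_sum fun i _ => by
          rw [abs_mul]
          exact mul_le_mul_of_nonneg_left (hC j e i) (abs_nonneg _)
      _ = B := (Finset.sum_mul _ _ _).symm
  have hx2int : ∀ j, Integrable (fun e => (∑ i, v i * β j e i) ^ 2) (ν j) := fun j =>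
    intBdd ((hxmeas j).pow_const 2) (C := B ^ 2) fun e => by
      rw [abs_pow]
      exact pow_le_pow_left₀ (abs_nonneg _) (hxbd j e) 2
  -- quadratic form bound
  have hQ := quadEq σ ν β hβmeas hC0 hC v
  have hell' : δ * S ≤ (∑ k, (∑ i, σ i k * v i) ^ 2)
      + ∑ j, ∫ e, (∑ i, v i * β j e i) ^ 2 ∂(ν j) := by
    rw [hQ]; exact hell v
  have hA0 : 0 ≤ ∑ k, (∑ i, σ i k * v i) ^ 2 := Finset.sum_nonneg fun _ _ => sq_nonneg _
  have hI0 : 0 ≤ ∑ j, ∫ e, (∑ i, v i * β j e i) ^ 2 ∂(ν j) :=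
    Finset.sum_nonneg fun j _ => integral_nonneg fun e => sq_nonneg _
  constructor
  · -- Hplus
    have hFint : ∀ j, Integrable (fun e =>
        Pp * ((max (1 + ∑ i, v i * β j e i) 0) ^ 2 - 1 - 2 * ∑ i, v i * β j e i)
          + Pm * (max (-(1 + ∑ i, v i * β j e i)) 0) ^ 2) (ν j) := fun j => by
      refine intBdd ?_ (C := Pp * ((1 + B) ^ 2 + 1 + 2 * B) + Pm * (1 + B) ^ 2)
        fun e => boundPlus Pp Pm _ B hPp hPm hB0 (hxbd j e)
      exact (measurable_const.mul (((((measurable_const.add (hxmeas j)).max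
          measurable_const).pow_const 2).sub measurable_const).sub
          (measurable_const.mul (hxmeas j)))).add
        (measurable_const.mul (((measurable_const.add (hxmeas j)).neg.max
          measurable_const).pow_const 2))
    have hjle : ∀ j, P0 * ∫ e, (∑ i, v i * β j e i) ^ 2 ∂(ν j)
        ≤ ∫ e, (Pp * ((max (1 + ∑ i, v i * β j e i) 0) ^ 2
            - 1 - 2 * ∑ i, v i * β j e i)
          + Pm * (max (-(1 + ∑ i, v i * β j e i)) 0) ^ 2) ∂(ν j) := fun j => by
      rw [← integral_const_mul]
      exact integral_mono ((hx2int j).const_mul _) (hFint j)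
        fun e => keyPlus Pp Pm _ hPp hPm
    have hsum : P0 * ∑ j, ∫ e, (∑ i, v i * β j e i) ^ 2 ∂(ν j)
        ≤ ∑ j, ∫ e, (Pp * ((max (1 + ∑ i, v i * β j e i) 0) ^ 2
            - 1 - 2 * ∑ i, v i * β j e i)
          + Pm * (max (-(1 + ∑ i, v i * β j e i)) 0) ^ 2) ∂(ν j) := by
      rw [Finset.mul_sum]
      exact Finset.sum_le_sum fun j _ => hjle j
    have hP0p : P0 ≤ Pp := min_le_left _ _
    have hPpmax : Pp ≤ Pmax := le_max_left _ _
    unfold Hplus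
    nlinarith [mul_le_mul_of_nonneg_left hell' hP0.le,
      mul_nonneg (sub_nonneg.2 hP0p) hA0,
      mul_le_mul_of_nonneg_left habs.1 (by positivity : (0:ℝ) ≤ 2 * Pp),
      mul_nonneg (sub_nonneg.2 hPpmax) (mul_nonneg hM0 hsq),
      hsum, hsq, hM0, hS0, hI0, hA0, hP0.le, hδ.le]
  · -- Hminus
    have hFint : ∀ j, Integrable (fun e =>
        Pm * ((max (1 - ∑ i, v i * β j e i) 0) ^ 2 - 1 + 2 * ∑ i, v i * β j e i)
          + Pp * (max (-(1 - ∑ i, v i * β j e i)) 0) ^ 2) (ν j) := fun j => by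
      refine intBdd ?_ (C := Pm * ((1 + B) ^ 2 + 1 + 2 * B) + Pp * (1 + B) ^ 2)
        fun e => boundMinus Pp Pm _ B hPp hPm hB0 (hxbd j e)
      exact (measurable_const.mul (((((measurable_const.sub (hxmeas j)).max
          measurable_const).pow_const 2).sub measurable_const).add
          (measurable_const.mul (hxmeas j)))).add
        (measurable_const.mul (((measurable_const.sub (hxmeas j)).neg.max
          measurable_const).pow_const 2))
    have hjle : ∀ j, P0 * ∫ e, (∑ i, v i * β j e i) ^ 2 ∂(ν j)
        ≤ ∫ e, (Pm * ((max (1 - ∑ i, v i * β j e i) 0) ^ 2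
            - 1 + 2 * ∑ i, v i * β j e i)
          + Pp * (max (-(1 - ∑ i, v i * β j e i)) 0) ^ 2) ∂(ν j) := fun j => by
      rw [← integral_const_mul]
      exact integral_mono ((hx2int j).const_mul _) (hFint j)
        fun e => keyMinus Pp Pm _ hPp hPm
    have hsum : P0 * ∑ j, ∫ e, (∑ i, v i * β j e i) ^ 2 ∂(ν j)
        ≤ ∑ j, ∫ e, (Pm * ((max (1 - ∑ i, v i * β j e i) 0) ^ 2
            - 1 + 2 * ∑ i, v i * β j e i)
          + Pp * (max (-(1 - ∑ i, v i * β j e i)) 0) ^ 2) ∂(ν j) := by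
      rw [Finset.mul_sum]
      exact Finset.sum_le_sum fun j _ => hjle j
    have hP0m : P0 ≤ Pm := min_le_right _ _
    have hPmmax : Pm ≤ Pmax := le_max_right _ _
    unfold Hminus
    nlinarith [mul_le_mul_of_nonneg_left hell' hP0.le,
      mul_nonneg (sub_nonneg.2 hP0m) hA0,
      mul_le_mul_of_nonneg_left habs.2 (by positivity : (0:ℝ) ≤ 2 * Pm),
      mul_nonneg (sub_nonneg.2 hPmmax) (mul_nonneg hM0 hsq),
      hsum, hsq, hM0, hS0, hI0, hA0, hP0.le, hδ.le]
end

section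
/- Assume uniform ellipticity: there is δ > 0 with vᵀΣv ≥ δ|v|² for all v ∈ ℝ^m. Then for any P₊ > 0 and P₋ > 0, the infima defining H*₊(P₊,P₋) and H*₋(P₊,P₋) are finite and are attained: there exist v̂₊, v̂₋ ∈ ℝ^m₊ with H₊(v̂₊,P₊,P₋) = H*₊(P₊,P₋) and H₋(v̂₋,P₊,P₋) = H*₋(P₊,P₋); moreover there is R > 0 (depending on P₊, P₋ and the data) such that every such minimizer v̂ satisfies |v̂| ≤ R. -/
open MeasureTheory Set

/-- pointwise integrand -/
noncomputable def gfun (Pp Pm x : ℝ) : ℝ :=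
  Pp * ((max (1 + x) 0) ^ 2 - 1 - 2 * x) + Pm * (max (-(1 + x)) 0) ^ 2

lemma gfun_eq (Pp Pm x : ℝ) :
    gfun Pp Pm x = Pp * x ^ 2 + (Pm - Pp) * (max (-(1 + x)) 0) ^ 2 := by
  unfold gfun
  rcases le_total 0 (1 + x) with h | h
  · rw [max_eq_left h, max_eq_right (by linarith)]; ring
  · rw [max_eq_right h, max_eq_left (by linarith)]; ring

lemma negpart_sq_le (x : ℝ) : (max (-(1 + x)) 0) ^ 2 ≤ x ^ 2 := by
  rcases le_total 0 (1 + x) with h | h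
  · rw [max_eq_right (by linarith)]
    nlinarith [sq_nonneg x]
  · rw [max_eq_left (by linarith)]; nlinarith

lemma gfun_lb {Pp Pm : ℝ} (_hPp : 0 < Pp) (_hPm : 0 < Pm) (x : ℝ) :
    min Pp Pm * x ^ 2 ≤ gfun Pp Pm x := by
  rw [gfun_eq]
  have h1 := negpart_sq_le x
  have h2 : (0:ℝ) ≤ (max (-(1 + x)) 0) ^ 2 := sq_nonneg _
  rcases le_total Pp Pm with h | h
  · rw [min_eq_left h]; nlinarith
  · rw [min_eq_right h]; nlinarith

lemma gfun_bound {Pp Pm : ℝ} (hPp : 0 < Pp) (hPm : 0 < Pm) {x B : ℝ} (hx : |x| ≤ B) :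
    |gfun Pp Pm x| ≤ (2 * Pp + Pm) * B ^ 2 := by
  have hx2 : x ^ 2 ≤ B ^ 2 := by nlinarith [abs_nonneg x, sq_abs x]
  rw [gfun_eq]
  have h1 := negpart_sq_le x
  have h2 : (0:ℝ) ≤ (max (-(1 + x)) 0) ^ 2 := sq_nonneg _
  rw [abs_le]
  constructor <;>
    nlinarith [mul_le_mul_of_nonneg_left hx2 hPp.le, mul_le_mul_of_nonneg_left h1 hPm.le,
      mul_le_mul_of_nonneg_left h1 hPp.le, mul_nonneg hPp.le h2, mul_nonneg hPm.le h2,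
      sq_nonneg B, mul_nonneg hPp.le (sq_nonneg x)]

lemma gfun_cont (Pp Pm : ℝ) : Continuous fun x => gfun Pp Pm x := by
  unfold gfun; fun_prop


section
set_option linter.unusedSectionVars false
variable {E : Type} [MeasurableSpace E] {m n ℓ : ℕ}
  {μ : Fin m → ℝ} {σ : Matrix (Fin m) (Fin n) ℝ}
  {ν : Fin ℓ → Measure E} [∀ j, IsFiniteMeasure (ν j)]
  {β : Fin ℓ → E → Fin m → ℝ} {C : ℝ}

lemma xmeas (hβmeas : ∀ j, Measurable (β j)) (v : Fin m → ℝ) (j : Fin ℓ) :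
    Measurable fun e => ∑ i, v i * β j e i :=
  Finset.measurable_sum _ fun i _ =>
    measurable_const.mul ((measurable_pi_apply i).comp (hβmeas j))

lemma xbound (hβbd : ∀ j e i, |β j e i| ≤ C) (v : Fin m → ℝ) (j : Fin ℓ) (e : E) :
    |∑ i, v i * β j e i| ≤ (∑ i, |v i|) * C := by
  calc |∑ i, v i * β j e i| ≤ ∑ i, |v i * β j e i| := Finset.abs_sum_le_sum_abs _ _
    _ ≤ ∑ i, |v i| * C := Finset.sum_le_sum fun i _ => by
        rw [abs_mul]; exact mul_le_mul_of_nonneg_left (hβbd j e i) (abs_nonneg _)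
    _ = _ := (Finset.sum_mul _ _ _).symm

lemma xcont (j : Fin ℓ) (e : E) : Continuous fun v : Fin m → ℝ => ∑ i, v i * β j e i :=
  continuous_finset_sum _ fun i _ => (continuous_apply i).mul continuous_const

lemma integrable_sq (hβmeas : ∀ j, Measurable (β j)) (hβbd : ∀ j e i, |β j e i| ≤ C)
    (v : Fin m → ℝ) (j : Fin ℓ) :
    Integrable (fun e => (∑ i, v i * β j e i) ^ 2) (ν j) := by
  refine ⟨((xmeas hβmeas v j).pow_const 2).aestronglyMeasurable, ?_⟩
  apply HasFiniteIntegral.of_bounded (C := ((∑ i, |v i|) * C) ^ 2)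
  filter_upwards with e
  have h := xbound hβbd v j e
  rw [Real.norm_eq_abs, abs_pow]
  exact pow_le_pow_left₀ (abs_nonneg _) h 2

lemma integrable_g (hβmeas : ∀ j, Measurable (β j)) (hβbd : ∀ j e i, |β j e i| ≤ C)
    {Pp Pm : ℝ} (hPp : 0 < Pp) (hPm : 0 < Pm) (v : Fin m → ℝ) (j : Fin ℓ) :
    Integrable (fun e => gfun Pp Pm (∑ i, v i * β j e i)) (ν j) := by
  refine ⟨((gfun_cont Pp Pm).measurable.comp (xmeas hβmeas v j)).aestronglyMeasurable, ?_⟩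
  apply HasFiniteIntegral.of_bounded (C := (2 * Pp + Pm) * ((∑ i, |v i|) * C) ^ 2)
  filter_upwards with e
  rw [Real.norm_eq_abs]
  exact gfun_bound hPp hPm (xbound hβbd v j e)

lemma sigma_qf (hβmeas : ∀ j, Measurable (β j)) (hβbd : ∀ j e i, |β j e i| ≤ C)
    (v : Fin m → ℝ) :
    ∑ i, ∑ k, v i * SigmaMat σ ν β i k * v k
      = ∑ k, (∑ i, σ i k * v i) ^ 2 + ∑ j, ∫ e, (∑ i, v i * β j e i) ^ 2 ∂(ν j) := by
  have hinteg : ∀ (j : Fin ℓ) (i k : Fin m), Integrable (fun e => β j e i * β j e k) (ν j) := by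
    intro j i k
    refine ⟨(((measurable_pi_apply i).comp (hβmeas j)).mul
      ((measurable_pi_apply k).comp (hβmeas j))).aestronglyMeasurable, ?_⟩
    apply HasFiniteIntegral.of_bounded (C := C * C)
    filter_upwards with e
    rw [Real.norm_eq_abs, abs_mul]
    exact mul_le_mul (hβbd j e i) (hβbd j e k) (abs_nonneg _)
      ((abs_nonneg _).trans (hβbd j e i))
  have expand : ∀ i k, v i * SigmaMat σ ν β i k * v k
      = (∑ j', (σ i j' * v i) * (σ k j' * v k))
        + ∑ j, ∫ e, (v i * v k) * (β j e i * β j e k) ∂(ν j) := by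
    intro i k
    simp only [SigmaMat, Matrix.of_apply]
    rw [mul_add, add_mul]
    congr 1
    · rw [Finset.mul_sum, Finset.sum_mul]
      exact Finset.sum_congr rfl fun j' _ => by ring
    · rw [Finset.mul_sum, Finset.sum_mul]
      refine Finset.sum_congr rfl fun j _ => ?_
      rw [← MeasureTheory.integral_const_mul, ← MeasureTheory.integral_mul_const]
      exact integral_congr_ae (Filter.Eventually.of_forall fun e => by ring)
  simp only [expand, Finset.sum_add_distrib]
  congr 1
  · calc ∑ i, ∑ k, ∑ j', (σ i j' * v i) * (σ k j' * v k)
        = ∑ i, ∑ j', ∑ k, (σ i j' * v i) * (σ k j' * v k) :=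
          Finset.sum_congr rfl fun i _ => Finset.sum_comm
      _ = ∑ j', ∑ i, ∑ k, (σ i j' * v i) * (σ k j' * v k) := Finset.sum_comm
      _ = ∑ j', (∑ i, σ i j' * v i) * (∑ k, σ k j' * v k) := by
          refine Finset.sum_congr rfl fun j' _ => ?_
          rw [Finset.sum_mul_sum]
      _ = ∑ k, (∑ i, σ i k * v i) ^ 2 := Finset.sum_congr rfl fun k _ => (sq _).symm
  · calc ∑ i, ∑ k, ∑ j, ∫ e, (v i * v k) * (β j e i * β j e k) ∂(ν j)
        = ∑ i, ∑ j, ∑ k, ∫ e, (v i * v k) * (β j e i * β j e k) ∂(ν j) :=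
          Finset.sum_congr rfl fun i _ => Finset.sum_comm
      _ = ∑ j, ∑ i, ∑ k, ∫ e, (v i * v k) * (β j e i * β j e k) ∂(ν j) := Finset.sum_comm
      _ = ∑ j, ∫ e, ∑ i, ∑ k, (v i * v k) * (β j e i * β j e k) ∂(ν j) := by
          refine Finset.sum_congr rfl fun j _ => ?_
          have h1 : ∀ i : Fin m, ∑ k, ∫ e, (v i * v k) * (β j e i * β j e k) ∂(ν j)
              = ∫ e, ∑ k, (v i * v k) * (β j e i * β j e k) ∂(ν j) := fun i =>
            (integral_finset_sum _ fun k _ => (hinteg j i k).const_mul _).symm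
          simp only [h1]
          exact (integral_finset_sum _ fun i _ => integrable_finset_sum _
            fun k _ => (hinteg j i k).const_mul _).symm
      _ = ∑ j, ∫ e, (∑ i, v i * β j e i) ^ 2 ∂(ν j) := by
          refine Finset.sum_congr rfl fun j _ => ?_
          refine integral_congr_ae (Filter.Eventually.of_forall fun e => ?_)
          show ∑ i, ∑ k, (v i * v k) * (β j e i * β j e k) = (∑ i, v i * β j e i) ^ 2
          rw [sq, Finset.sum_mul_sum]
          exact Finset.sum_congr rfl fun i _ => Finset.sum_congr rfl fun k _ => by ring

lemma hplus_eq (v : Fin m → ℝ) (Pp Pm : ℝ) :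
    Hplus μ σ ν β v Pp Pm
      = Pp * ∑ k, (∑ i, σ i k * v i) ^ 2 + 2 * Pp * ∑ i, μ i * v i
        + ∑ j, ∫ e, gfun Pp Pm (∑ i, v i * β j e i) ∂(ν j) := rfl

lemma hplus_zero (Pp Pm : ℝ) : Hplus μ σ ν β 0 Pp Pm = 0 := by
  simp [Hplus]

lemma hplus_lb (hβmeas : ∀ j, Measurable (β j)) (hβbd : ∀ j e i, |β j e i| ≤ C)
    {δ Pp Pm : ℝ} (hδ : 0 < δ) (hPp : 0 < Pp) (hPm : 0 < Pm)
    (hell : ∀ v : Fin m → ℝ,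
      δ * ∑ i, v i ^ 2 ≤ ∑ i, ∑ k, v i * SigmaMat σ ν β i k * v k)
    (v : Fin m → ℝ) :
    min Pp Pm * δ * (∑ i, v i ^ 2)
        - (2 * Pp * Real.sqrt (∑ i, μ i ^ 2)) * Real.sqrt (∑ i, v i ^ 2)
      ≤ Hplus μ σ ν β v Pp Pm := by
  set c := min Pp Pm with hc
  have hc0 : 0 < c := lt_min hPp hPm
  have h1 : ∀ j : Fin ℓ, c * ∫ e, (∑ i, v i * β j e i) ^ 2 ∂(ν j)
      ≤ ∫ e, gfun Pp Pm (∑ i, v i * β j e i) ∂(ν j) := by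
    intro j
    rw [← MeasureTheory.integral_const_mul]
    exact integral_mono ((integrable_sq hβmeas hβbd v j).const_mul c)
      (integrable_g hβmeas hβbd hPp hPm v j) fun e => gfun_lb hPp hPm _
  have h2 : c * ∑ j, ∫ e, (∑ i, v i * β j e i) ^ 2 ∂(ν j)
      ≤ ∑ j, ∫ e, gfun Pp Pm (∑ i, v i * β j e i) ∂(ν j) := by
    rw [Finset.mul_sum]; exact Finset.sum_le_sum fun j _ => h1 j
  have hA : (0:ℝ) ≤ ∑ k, (∑ i, σ i k * v i) ^ 2 :=
    Finset.sum_nonneg fun k _ => sq_nonneg _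
  have hqf : δ * ∑ i, v i ^ 2
      ≤ ∑ k, (∑ i, σ i k * v i) ^ 2 + ∑ j, ∫ e, (∑ i, v i * β j e i) ^ 2 ∂(ν j) :=
    (hell v).trans_eq (sigma_qf hβmeas hβbd v)
  have hcs : -(Real.sqrt (∑ i, μ i ^ 2) * Real.sqrt (∑ i, v i ^ 2)) ≤ ∑ i, μ i * v i := by
    have h := Real.sum_mul_le_sqrt_mul_sqrt Finset.univ (fun i => -μ i) v
    simp only [neg_mul, Finset.sum_neg_distrib, neg_sq] at h
    linarith
  rw [hplus_eq]
  have hcA : c * (∑ k, (∑ i, σ i k * v i) ^ 2) ≤ Pp * (∑ k, (∑ i, σ i k * v i) ^ 2) :=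
    mul_le_mul_of_nonneg_right (min_le_left _ _) hA
  have hmu : 2 * Pp * (-(Real.sqrt (∑ i, μ i ^ 2) * Real.sqrt (∑ i, v i ^ 2)))
      ≤ 2 * Pp * ∑ i, μ i * v i :=
    mul_le_mul_of_nonneg_left hcs (by positivity)
  have hqf' : c * (δ * ∑ i, v i ^ 2)
      ≤ c * (∑ k, (∑ i, σ i k * v i) ^ 2 + ∑ j, ∫ e, (∑ i, v i * β j e i) ^ 2 ∂(ν j)) :=
    mul_le_mul_of_nonneg_left hqf hc0.le
  nlinarith [h2, hcA, hmu, hqf']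

lemma hplus_cont (hβmeas : ∀ j, Measurable (β j)) (hβbd : ∀ j e i, |β j e i| ≤ C)
    (hC : 0 ≤ C) {Pp Pm : ℝ} (hPp : 0 < Pp) (hPm : 0 < Pm) :
    Continuous fun v => Hplus μ σ ν β v Pp Pm := by
  have hpoly : Continuous fun v : Fin m → ℝ =>
      Pp * ∑ k, (∑ i, σ i k * v i) ^ 2 + 2 * Pp * ∑ i, μ i * v i := by fun_prop
  have hint : ∀ j : Fin ℓ,
      Continuous fun v : Fin m → ℝ => ∫ e, gfun Pp Pm (∑ i, v i * β j e i) ∂(ν j) := by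
    intro j
    rw [continuous_iff_continuousAt]
    intro v₀
    apply MeasureTheory.continuousAt_of_dominated
      (bound := fun _ => (2 * Pp + Pm) * ((m * (‖v₀‖ + 1)) * C) ^ 2)
    · filter_upwards with v
      exact ((gfun_cont Pp Pm).measurable.comp (xmeas hβmeas v j)).aestronglyMeasurable
    · filter_upwards [Metric.ball_mem_nhds v₀ one_pos] with v hv
      filter_upwards with e
      rw [Real.norm_eq_abs]
      refine gfun_bound hPp hPm ((xbound hβbd v j e).trans ?_)
      refine mul_le_mul_of_nonneg_right ?_ hC
      have hv' : ‖v‖ ≤ ‖v₀‖ + 1 := by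
        rw [Metric.mem_ball, dist_eq_norm] at hv
        have := norm_sub_norm_le v v₀
        linarith
      calc ∑ i, |v i| ≤ ∑ _i : Fin m, ‖v‖ :=
            Finset.sum_le_sum fun i _ => norm_le_pi_norm v i
        _ = m * ‖v‖ := by simp [Finset.sum_const, nsmul_eq_mul]
        _ ≤ m * (‖v₀‖ + 1) := by
            exact mul_le_mul_of_nonneg_left hv' (by positivity)
    · exact integrable_const _
    · filter_upwards with e
      exact ((gfun_cont Pp Pm).continuousAt).comp (xcont j e).continuousAt
  exact hpoly.add (continuous_finset_sum _ fun j _ => hint j)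

lemma exists_min_of_coercive (f : (Fin m → ℝ) → ℝ) (hf : Continuous f) (hf0 : f 0 = 0)
    {a b : ℝ} (ha : 0 < a) (hb : 0 ≤ b)
    (hlb : ∀ v : Fin m → ℝ, a * (∑ i, v i ^ 2) - b * Real.sqrt (∑ i, v i ^ 2) ≤ f v) :
    ∃ vp : Fin m → ℝ, (∀ i, 0 ≤ vp i) ∧ (∀ v, (∀ i, 0 ≤ v i) → f vp ≤ f v) ∧
      f vp = sInf (f '' {v : Fin m → ℝ | ∀ i, 0 ≤ v i}) ∧
      ∀ v : Fin m → ℝ, (∀ i, 0 ≤ v i) →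
        f v = sInf (f '' {v : Fin m → ℝ | ∀ i, 0 ≤ v i}) →
        Real.sqrt (∑ i, v i ^ 2) ≤ b / a + 1 := by
  set ρ : ℝ := b / a + 1 with hρdef
  have hρ : 0 < ρ := by positivity
  have haρ : b < a * ρ := by
    rw [hρdef, mul_add, mul_one, mul_div_cancel₀ _ ha.ne']
    linarith
  set S : Set (Fin m → ℝ) := {v | ∀ i, 0 ≤ v i} with hSdef
  set K : Set (Fin m → ℝ) := S ∩ {v | ∑ i, v i ^ 2 ≤ ρ ^ 2} with hKdef
  have hSclosed : IsClosed S := by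
    have : S = ⋂ i, {v : Fin m → ℝ | 0 ≤ v i} := by ext v; simp [hSdef]
    rw [this]
    exact isClosed_iInter fun i => isClosed_le continuous_const (continuous_apply i)
  have hKclosed : IsClosed K :=
    hSclosed.inter (isClosed_le (by fun_prop) continuous_const)
  have hKsub : K ⊆ Metric.closedBall 0 ρ := by
    intro v hv
    rw [Metric.mem_closedBall, dist_zero_right, pi_norm_le_iff_of_nonneg hρ.le]
    intro i
    have h1 : v i ^ 2 ≤ ρ ^ 2 :=
      le_trans (Finset.single_le_sum (f := fun i => v i ^ 2)
        (fun i _ => sq_nonneg _) (Finset.mem_univ i)) hv.2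
    have h2 := Real.sqrt_le_sqrt h1
    rw [Real.sqrt_sq_eq_abs, Real.sqrt_sq hρ.le] at h2
    rwa [Real.norm_eq_abs]
  have hKcompact : IsCompact K :=
    (isCompact_closedBall (0 : Fin m → ℝ) ρ).of_isClosed_subset hKclosed hKsub
  have h0K : (0 : Fin m → ℝ) ∈ K := by
    refine ⟨fun i => le_refl 0, ?_⟩
    show ∑ i : Fin m, (0:ℝ) ^ 2 ≤ ρ ^ 2
    simp only [ne_eq, OfNat.ofNat_ne_zero, not_false_eq_true, zero_pow, Finset.sum_const_zero]
    positivity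
  obtain ⟨vp, hvpK, hvpmin'⟩ := hKcompact.exists_isMinOn ⟨0, h0K⟩ hf.continuousOn
  have hvpmin : ∀ w ∈ K, f vp ≤ f w := fun w hw => hvpmin' hw
  have hmin : ∀ v : Fin m → ℝ, (∀ i, 0 ≤ v i) → f vp ≤ f v := by
    intro v hv
    by_cases hcase : ∑ i, v i ^ 2 ≤ ρ ^ 2
    · exact hvpmin v ⟨hv, hcase⟩
    · push_neg at hcase
      set N := Real.sqrt (∑ i, v i ^ 2) with hNdef
      have hN2 : N ^ 2 = ∑ i, v i ^ 2 := Real.sq_sqrt (by positivity)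
      have hN : ρ < N := by
        have := Real.sqrt_lt_sqrt (by positivity) hcase
        rwa [Real.sqrt_sq hρ.le] at this
      have hfv : 0 < f v := by
        have hl := hlb v
        rw [← hNdef, ← hN2] at hl
        have h3 : b < a * N := haρ.trans_le (mul_le_mul_of_nonneg_left hN.le ha.le)
        have h4 : 0 < N := hρ.trans hN
        nlinarith [mul_pos (sub_pos.mpr h3) h4]
      have hvp0 : f vp ≤ 0 := by
        have := hvpmin 0 h0K
        rwa [hf0] at this
      linarith
  have hvpS : ∀ i, 0 ≤ vp i := hvpK.1
  have hleast : IsLeast (f '' S) (f vp) :=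
    ⟨⟨vp, hvpS, rfl⟩, by rintro y ⟨w, hw, rfl⟩; exact hmin w hw⟩
  have hsinf : f vp = sInf (f '' S) := (hleast.csInf_eq).symm
  refine ⟨vp, hvpS, hmin, hsinf, ?_⟩
  intro v hv hfv
  have hfv0 : f v ≤ 0 := by
    rw [hfv, ← hsinf]
    have := hmin 0 fun i => le_refl 0
    rwa [hf0] at this
  set N := Real.sqrt (∑ i, v i ^ 2) with hNdef
  have hN0 : 0 ≤ N := Real.sqrt_nonneg _
  have hN2 : N ^ 2 = ∑ i, v i ^ 2 := Real.sq_sqrt (by positivity)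
  have hl := hlb v
  rw [← hNdef, ← hN2] at hl
  by_contra hcon
  push_neg at hcon
  have h3 : b < a * N := haρ.trans_le (mul_le_mul_of_nonneg_left hcon.le ha.le)
  have h4 : 0 < N := hρ.trans hcon
  nlinarith [mul_pos (sub_pos.mpr h3) h4]
end


section
set_option linter.unusedSectionVars false
variable {E : Type} [MeasurableSpace E] {m n ℓ : ℕ}
  {μ : Fin m → ℝ} {σ : Matrix (Fin m) (Fin n) ℝ}
  {ν : Fin ℓ → Measure E} [∀ j, IsFiniteMeasure (ν j)]
  {β : Fin ℓ → E → Fin m → ℝ} {C : ℝ}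

lemma hminus_eq_hplus (v : Fin m → ℝ) (Pp Pm : ℝ) :
    Hminus μ σ ν β v Pp Pm
      = Hplus (fun i => -μ i) σ ν (fun j e i => -(β j e i)) v Pm Pp := by
  unfold Hplus Hminus
  congr 1
  · have h : (∑ i, -μ i * v i) = -∑ i, μ i * v i := by
      rw [← Finset.sum_neg_distrib]
      exact Finset.sum_congr rfl fun i _ => by ring
    rw [h]; ring
  · refine Finset.sum_congr rfl fun j _ => ?_
    refine integral_congr_ae (Filter.Eventually.of_forall fun e => ?_)
    show Pm * ((max (1 - ∑ i, v i * β j e i) 0) ^ 2 - 1 + 2 * ∑ i, v i * β j e i)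
          + Pp * (max (-(1 - ∑ i, v i * β j e i)) 0) ^ 2
        = Pm * ((max (1 + ∑ i, v i * -(β j e i)) 0) ^ 2 - 1 - 2 * ∑ i, v i * -(β j e i))
          + Pp * (max (-(1 + ∑ i, v i * -(β j e i))) 0) ^ 2
    have hsum : (∑ i, v i * -(β j e i)) = -∑ i, v i * β j e i := by
      rw [← Finset.sum_neg_distrib]
      exact Finset.sum_congr rfl fun i _ => by ring
    rw [hsum]
    have h1 : 1 + -(∑ i, v i * β j e i) = 1 - ∑ i, v i * β j e i := by ring
    rw [h1]
    ring

lemma sigmaMat_neg :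
    SigmaMat σ ν (fun j e i => -(β j e i)) = SigmaMat σ ν β := by
  unfold SigmaMat
  congr 1
  funext i k
  simp [neg_mul_neg]

lemma hminus_zero (Pp Pm : ℝ) : Hminus μ σ ν β 0 Pp Pm = 0 := by
  simp [Hminus]
end


/-- under ellipticity and `P₊, P₋ > 0`, the infima defining `H*₊` and `H*₋`
are attained on `ℝ^m₊`, and all minimizers have norm at most some `R > 0`. -/
theorem stmt10 {E : Type} [MeasurableSpace E] {m n ℓ : ℕ}
    (hm : 0 < m) (hn : 0 < n) (hl : 0 < ℓ)
    (μ : Fin m → ℝ) (σ : Matrix (Fin m) (Fin n) ℝ)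
    (ν : Fin ℓ → Measure E) [∀ j, IsFiniteMeasure (ν j)]
    (β : Fin ℓ → E → Fin m → ℝ)
    (hβmeas : ∀ j, Measurable (β j))
    (hβbd : ∃ C, ∀ j e i, |β j e i| ≤ C)
    (δ : ℝ) (hδ : 0 < δ)
    (hell : ∀ v : Fin m → ℝ,
      δ * ∑ i, v i ^ 2 ≤ ∑ i, ∑ k, v i * SigmaMat σ ν β i k * v k)
    (Pp Pm : ℝ) (hPp : 0 < Pp) (hPm : 0 < Pm) :
    (∃ vp : Fin m → ℝ, (∀ i, 0 ≤ vp i) ∧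
      (∀ v : Fin m → ℝ, (∀ i, 0 ≤ v i) → Hplus μ σ ν β vp Pp Pm ≤ Hplus μ σ ν β v Pp Pm) ∧
      Hplus μ σ ν β vp Pp Pm = HstarPlus μ σ ν β Pp Pm) ∧
    (∃ vm : Fin m → ℝ, (∀ i, 0 ≤ vm i) ∧
      (∀ v : Fin m → ℝ, (∀ i, 0 ≤ v i) → Hminus μ σ ν β vm Pp Pm ≤ Hminus μ σ ν β v Pp Pm) ∧
      Hminus μ σ ν β vm Pp Pm = HstarMinus μ σ ν β Pp Pm) ∧
    (∃ R > (0:ℝ),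
      (∀ v : Fin m → ℝ, (∀ i, 0 ≤ v i) →
        Hplus μ σ ν β v Pp Pm = HstarPlus μ σ ν β Pp Pm → Real.sqrt (∑ i, v i ^ 2) ≤ R) ∧
      (∀ v : Fin m → ℝ, (∀ i, 0 ≤ v i) →
        Hminus μ σ ν β v Pp Pm = HstarMinus μ σ ν β Pp Pm → Real.sqrt (∑ i, v i ^ 2) ≤ R)) := by
  obtain ⟨C₀, hC₀⟩ := hβbd
  set C := max C₀ 0 with hCdef
  have hC : (0:ℝ) ≤ C := le_max_right _ _
  have hβbd' : ∀ j e i, |β j e i| ≤ C := fun j e i => (hC₀ j e i).trans (le_max_left _ _)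
  set μ' : Fin m → ℝ := fun i => -μ i with hμ'def
  set β' : Fin ℓ → E → Fin m → ℝ := fun j e i => -(β j e i) with hβ'def
  have hβ'meas : ∀ j, Measurable (β' j) := fun j =>
    measurable_pi_iff.mpr fun i => ((measurable_pi_apply i).comp (hβmeas j)).neg
  have hβ'bd : ∀ j e i, |β' j e i| ≤ C := fun j e i => by
    simp only [hβ'def, abs_neg]; exact hβbd' j e i
  have hell' : ∀ v : Fin m → ℝ,
      δ * ∑ i, v i ^ 2 ≤ ∑ i, ∑ k, v i * SigmaMat σ ν β' i k * v k := by
    intro v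
    rw [show SigmaMat σ ν β' = SigmaMat σ ν β from sigmaMat_neg]
    exact hell v
  have hM : (0:ℝ) ≤ Real.sqrt (∑ i, μ i ^ 2) := Real.sqrt_nonneg _
  have ha : 0 < min Pp Pm * δ := mul_pos (lt_min hPp hPm) hδ
  -- plus part
  have hlbp : ∀ v : Fin m → ℝ,
      (min Pp Pm * δ) * (∑ i, v i ^ 2)
        - (2 * Pp * Real.sqrt (∑ i, μ i ^ 2)) * Real.sqrt (∑ i, v i ^ 2)
      ≤ Hplus μ σ ν β v Pp Pm := fun v => by
    have := hplus_lb (μ := μ) hβmeas hβbd' hδ hPp hPm hell v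
    linarith
  obtain ⟨vp, hvp1, hvp2, hvp3, hvp4⟩ :=
    exists_min_of_coercive (fun v => Hplus μ σ ν β v Pp Pm)
      (hplus_cont hβmeas hβbd' hC hPp hPm) (hplus_zero Pp Pm) ha (by positivity) hlbp
  -- minus part
  have hmeq : (fun v => Hminus μ σ ν β v Pp Pm)
      = fun v => Hplus μ' σ ν β' v Pm Pp := funext fun v => hminus_eq_hplus v Pp Pm
  have hmcont : Continuous fun v => Hminus μ σ ν β v Pp Pm := by
    rw [hmeq]; exact hplus_cont hβ'meas hβ'bd hC hPm hPp
  have hμ'sq : (∑ i, μ' i ^ 2) = ∑ i, μ i ^ 2 := by simp [hμ'def]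
  have hlbm : ∀ v : Fin m → ℝ,
      (min Pp Pm * δ) * (∑ i, v i ^ 2)
        - (2 * Pm * Real.sqrt (∑ i, μ i ^ 2)) * Real.sqrt (∑ i, v i ^ 2)
      ≤ Hminus μ σ ν β v Pp Pm := fun v => by
    rw [hminus_eq_hplus]
    have := hplus_lb (μ := μ') hβ'meas hβ'bd hδ hPm hPp hell' v
    rw [hμ'sq, min_comm Pm Pp] at this
    linarith
  obtain ⟨vm, hvm1, hvm2, hvm3, hvm4⟩ :=
    exists_min_of_coercive (fun v => Hminus μ σ ν β v Pp Pm)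
      hmcont (hminus_zero Pp Pm) ha (by positivity) hlbm
  refine ⟨⟨vp, hvp1, hvp2, hvp3⟩, ⟨vm, hvm1, hvm2, hvm3⟩, ?_⟩
  refine ⟨max (2 * Pp * Real.sqrt (∑ i, μ i ^ 2) / (min Pp Pm * δ) + 1)
      (2 * Pm * Real.sqrt (∑ i, μ i ^ 2) / (min Pp Pm * δ) + 1), ?_,
    fun v hv hfv => (hvp4 v hv hfv).trans (le_max_left _ _),
    fun v hv hfv => (hvm4 v hv hfv).trans (le_max_right _ _)⟩
  have : (0:ℝ) < 2 * Pp * Real.sqrt (∑ i, μ i ^ 2) / (min Pp Pm * δ) + 1 := by positivity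
  exact lt_max_iff.mpr (Or.inl this)
end

section
/- Assume every component of β_j(e) lies in (−1, 0] for all j = 1,…,ℓ and ν_j-a.e. e ∈ E. Then for every v ∈ ℝ^m₊ and all P₊, P₋ ∈ ℝ one has H₋(v,P₊,P₋) = P₋(vᵀΣv − 2μᵀv); consequently, for P₋ ≥ 0, H*₋(P₊,P₋) = P₋ · inf_{v ∈ ℝ^m₊}(vᵀΣv − 2μᵀv), which is linear in P₋ and independent of P₊. -/
open MeasureTheory Set

/-- if every component of the jump sizes lies a.e. in `(−1, 0]`, then on
`ℝ^m₊` `H₋(v,P₊,P₋) = P₋(vᵀΣv − 2μᵀv)`; hence for `P₋ ≥ 0`, `H*₋(P₊,P₋)` is linear in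
`P₋` and independent of `P₊`. -/
theorem stmt17 {E : Type} [MeasurableSpace E] {m n ℓ : ℕ}
    (hm : 0 < m) (hn : 0 < n) (hl : 0 < ℓ)
    (μ : Fin m → ℝ) (σ : Matrix (Fin m) (Fin n) ℝ)
    (ν : Fin ℓ → Measure E) [∀ j, IsFiniteMeasure (ν j)]
    (β : Fin ℓ → E → Fin m → ℝ)
    (hβmeas : ∀ j, Measurable (β j))
    (hβbd : ∃ C, ∀ j e i, |β j e i| ≤ C)
    (hβrange : ∀ j, ∀ᵐ e ∂(ν j), ∀ i, -1 < β j e i ∧ β j e i ≤ 0) :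
    (∀ (Pp Pm : ℝ) (v : Fin m → ℝ), (∀ i, 0 ≤ v i) →
      Hminus μ σ ν β v Pp Pm
        = Pm * ((∑ i, ∑ k, v i * SigmaMat σ ν β i k * v k) - 2 * ∑ i, μ i * v i)) ∧
    (∀ Pm : ℝ, 0 ≤ Pm → ∀ Pp : ℝ,
      HstarMinus μ σ ν β Pp Pm
        = Pm * sInf ((fun v : Fin m → ℝ =>
            (∑ i, ∑ k, v i * SigmaMat σ ν β i k * v k) - 2 * ∑ i, μ i * v i)
              '' {v : Fin m → ℝ | ∀ i, 0 ≤ v i})) := by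

  obtain ⟨C, hC⟩ := hβbd
  -- integrability of products of β components
  have hint : ∀ (j : Fin ℓ) (i k : Fin m),
      Integrable (fun e => β j e i * β j e k) (ν j) := by
    intro j i k
    have hmeas : Measurable fun e => β j e i * β j e k :=
      ((measurable_pi_apply i).comp (hβmeas j)).mul
        ((measurable_pi_apply k).comp (hβmeas j))
    refine ⟨hmeas.aestronglyMeasurable, ?_⟩
    apply MeasureTheory.HasFiniteIntegral.of_bounded (C := C * C)
    filter_upwards with e
    simp only [Real.norm_eq_abs, abs_mul]
    exact mul_le_mul (hC j e i) (hC j e k) (abs_nonneg _)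
      (le_trans (abs_nonneg _) (hC j e i))
  -- the key pointwise identity
  have key : ∀ (Pp Pm : ℝ) (v : Fin m → ℝ), (∀ i, 0 ≤ v i) →
      Hminus μ σ ν β v Pp Pm
        = Pm * ((∑ i, ∑ k, v i * SigmaMat σ ν β i k * v k) - 2 * ∑ i, μ i * v i) := by
    intro Pp Pm v hv
    have hintegral : ∀ j : Fin ℓ,
        (∫ e, (Pm * ((max (1 - ∑ i, v i * β j e i) 0) ^ 2
            - 1 + 2 * ∑ i, v i * β j e i)
          + Pp * (max (-(1 - ∑ i, v i * β j e i)) 0) ^ 2) ∂(ν j))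
        = Pm * ∑ i, ∑ k, v i * v k * ∫ e, β j e i * β j e k ∂(ν j) := by
      intro j
      have hae : ∀ᵐ e ∂(ν j),
          (Pm * ((max (1 - ∑ i, v i * β j e i) 0) ^ 2
              - 1 + 2 * ∑ i, v i * β j e i)
            + Pp * (max (-(1 - ∑ i, v i * β j e i)) 0) ^ 2)
          = Pm * ∑ i, ∑ k, (v i * v k) * (β j e i * β j e k) := by
        filter_upwards [hβrange j] with e he
        have hs : (∑ i, v i * β j e i) ≤ 0 := by
          apply Finset.sum_nonpos
          intro i _
          exact mul_nonpos_of_nonneg_of_nonpos (hv i) (he i).2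
        have h1 : (0 : ℝ) ≤ 1 - ∑ i, v i * β j e i := by linarith
        rw [max_eq_left h1, max_eq_right (by linarith : -(1 - ∑ i, v i * β j e i) ≤ 0)]
        have hsq : (∑ i, v i * β j e i) ^ 2
            = ∑ i, ∑ k, (v i * v k) * (β j e i * β j e k) := by
          rw [sq, Finset.sum_mul_sum]
          apply Finset.sum_congr rfl; intro i _
          apply Finset.sum_congr rfl; intro k _
          ring
        rw [← hsq]; ring
      rw [integral_congr_ae hae]
      rw [integral_const_mul]
      congr 1
      rw [integral_finset_sum]
      · apply Finset.sum_congr rfl; intro i _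
        rw [integral_finset_sum]
        · apply Finset.sum_congr rfl; intro k _
          rw [integral_const_mul]
        · intro k _
          exact (hint j i k).const_mul _
      · intro i _
        apply integrable_finset_sum
        intro k _
        exact (hint j i k).const_mul _
    unfold Hminus
    rw [Finset.sum_congr rfl (fun j _ => hintegral j)]
    unfold SigmaMat
    simp only [Matrix.of_apply]
    have hquad : ∑ k, (∑ i, σ i k * v i) ^ 2
        = ∑ i, ∑ k, v i * (∑ j', σ i j' * σ k j') * v k := by
      have h1 : ∀ k' : Fin n, (∑ i, σ i k' * v i) ^ 2
          = ∑ i, ∑ k, v i * (σ i k' * σ k k') * v k := by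
        intro k'
        rw [sq, Finset.sum_mul_sum]
        apply Finset.sum_congr rfl; intro i _
        apply Finset.sum_congr rfl; intro k _
        ring
      rw [Finset.sum_congr rfl fun k' _ => h1 k', Finset.sum_comm]
      apply Finset.sum_congr rfl; intro i _
      rw [Finset.sum_comm]
      apply Finset.sum_congr rfl; intro k _
      simp only [Finset.mul_sum, Finset.sum_mul]
      try (apply Finset.sum_congr rfl; intro j' _; ring)
    have hexp : ∑ i, ∑ k, v i * ((∑ j', σ i j' * σ k j')
          + ∑ j, ∫ e, β j e i * β j e k ∂(ν j)) * v k
        = (∑ i, ∑ k, v i * (∑ j', σ i j' * σ k j') * v k)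
          + ∑ j, ∑ i, ∑ k, v i * v k * ∫ e, β j e i * β j e k ∂(ν j) := by
      have step : ∀ i k, v i * ((∑ j', σ i j' * σ k j')
            + ∑ j, ∫ e, β j e i * β j e k ∂(ν j)) * v k
          = v i * (∑ j', σ i j' * σ k j') * v k
            + ∑ j, v i * v k * ∫ e, β j e i * β j e k ∂(ν j) := by
        intro i k
        rw [mul_add, add_mul]
        congr 1
        rw [Finset.mul_sum, Finset.sum_mul]
        apply Finset.sum_congr rfl; intro j _
        ring
      simp only [step, Finset.sum_add_distrib]
      congr 1
      rw [Finset.sum_congr rfl fun i _ => Finset.sum_comm, Finset.sum_comm]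
    rw [hquad, hexp, ← Finset.mul_sum]
    ring
  refine ⟨key, ?_⟩
  intro Pm hPm Pp
  unfold HstarMinus
  have himg : (fun v => Hminus μ σ ν β v Pp Pm) '' {v : Fin m → ℝ | ∀ i, 0 ≤ v i}
      = (fun x => Pm * x) '' ((fun v : Fin m → ℝ =>
          (∑ i, ∑ k, v i * SigmaMat σ ν β i k * v k) - 2 * ∑ i, μ i * v i)
            '' {v : Fin m → ℝ | ∀ i, 0 ≤ v i}) := by
    rw [Set.image_image]
    exact Set.image_congr fun v hv => key Pp Pm v hv
  rw [himg]
  have := Real.sInf_smul_of_nonneg hPm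
    ((fun v : Fin m → ℝ =>
      (∑ i, ∑ k, v i * SigmaMat σ ν β i k * v k) - 2 * ∑ i, μ i * v i)
        '' {v : Fin m → ℝ | ∀ i, 0 ≤ v i})
  simpa [← Set.image_smul, smul_eq_mul] using this
end
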